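/- arXiv:1703.09011 — 2 statements merged into one kernel-verified Lean document; each statement's English description precedes it below -/
import Mathlib

section
/- Fix an integer b ≥ 2, let ζ_h = ∑_{j≥h} (b−1)²/((b^j−1)(b^{j+1}−1)), and define Ξ_k = (b−1)·b^k·∑_{h>k} b^{h−1}·ζ_h for k ≥ 0. Then (Ξ_k) is strictly decreasing in k and lim_{k→∞} Ξ_k = (b−1)/(b+1). -/
open Filter

/-- `ζ_h = ∑_{j ≥ h} (b−1)² / ((b^j − 1)(b^{j+1} − 1))`, written as a sum over `j = h + i`. -/
noncomputable def zeta (b h : ℕ) : ℝ :=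
  ∑' i : ℕ, ((b : ℝ) - 1) ^ 2 / (((b : ℝ) ^ (h + i) - 1) * ((b : ℝ) ^ (h + i + 1) - 1))

/-- `Ξ_k = (b−1)·b^k·∑_{h > k} b^{h−1}·ζ_h`, written as a sum over `h = k + 1 + i`. -/
noncomputable def Xi (b k : ℕ) : ℝ :=
  ((b : ℝ) - 1) * (b : ℝ) ^ k * ∑' i : ℕ, (b : ℝ) ^ (k + i) * zeta b (k + 1 + i)

/-!
Write `ζ_h = ∑_{j ≥ h} t_j` with `t_j = (b−1)²/((b^j−1)(b^{j+1}−1))`. Then `Ξ_k` is a double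
series of nonnegative terms indexed by `(i, m)` with `j = k + 1 + i + m`; summing along the
antidiagonals `i + m = n` and using `∑_{i ≤ n} b^i = (b^{n+1}−1)/(b−1)` gives `Ξ_k = S(b^{-k})`, where
`S(ε) = ∑_n (b^{n+1}−1)(b−1)² / ((b^{n+1}−ε)(b^{n+2}−ε))`.
Each term of `S` is strictly increasing in `ε ∈ [0, 1]`, so `Ξ_k` is strictly decreasing, and by
dominated convergence `Ξ_k → S(0)`, which is a difference of two geometric series equal to
`(b−1)/(b+1)`.
-/

open Finset

theorem Summable.tsum_eq_tsum_sum_antidiagonal {α A : Type*} [AddCommMonoid α]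
    [TopologicalSpace α] [ContinuousAdd α] [T3Space α] [AddMonoid A] [HasAntidiagonal A]
    {f : A × A → α} (hf : Summable f) : ∑' p, f p = ∑' n, ∑ p ∈ antidiagonal n, f p := by
  have hσ : Summable fun c : Σ n : A, antidiagonal n => f c.2 :=
    HasAntidiagonal.sigmaAntidiagonalEquivProd.summable_iff.mpr hf
  rw [← HasAntidiagonal.sigmaAntidiagonalEquivProd.tsum_eq f]
  exact (hσ.tsum_sigma' fun n => (hasSum_fintype _).summable).trans
    (tsum_congr fun n => Finset.tsum_subtype (antidiagonal n) f)

theorem summable_of_summable_sum_antidiagonal_of_nonneg {A : Type*} [AddMonoid A]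
    [HasAntidiagonal A] {f : A × A → ℝ} (hf : 0 ≤ f)
    (h : Summable fun n => ∑ p ∈ antidiagonal n, f p) : Summable f := by
  have hσ : Summable fun c : Σ n : A, antidiagonal n => f c.2 := by
    refine (summable_sigma_of_nonneg fun _ => hf _).mpr ⟨fun n => (hasSum_fintype _).summable, ?_⟩
    simpa only [Finset.tsum_subtype] using h
  exact HasAntidiagonal.sigmaAntidiagonalEquivProd.summable_iff.mp hσ

noncomputable def zetaTerm (x : ℝ) (j : ℕ) : ℝ := (x - 1) ^ 2 / ((x ^ j - 1) * (x ^ (j + 1) - 1))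

-- At `x = b` and `ε = b^{-k}` this is the `n`-th antidiagonal sum of the double series for `Ξ_k`.
noncomputable def xiTerm (x ε : ℝ) (n : ℕ) : ℝ :=
  (x ^ (n + 1) - 1) * (x - 1) ^ 2 / ((x ^ (n + 1) - ε) * (x ^ (n + 2) - ε))

noncomputable def xiSeries (x ε : ℝ) : ℝ := ∑' n, xiTerm x ε n

section
variable {x : ℝ}

theorem zetaTerm_nonneg (hx : 1 ≤ x) (j : ℕ) : 0 ≤ zetaTerm x j := by
  have h₁ : 0 ≤ x ^ j - 1 := sub_nonneg.mpr (one_le_pow₀ hx)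
  have h₂ : 0 ≤ x ^ (j + 1) - 1 := sub_nonneg.mpr (one_le_pow₀ hx)
  unfold zetaTerm
  positivity

theorem xiTerm_inv_pow (hx : 1 < x) (k n : ℕ) :
    xiTerm x (x⁻¹ ^ k) n = x ^ k * x ^ k * (x ^ (n + 1) - 1) * zetaTerm x (k + 1 + n) := by
  have hy : 1 ≤ x ^ k := one_le_pow₀ hx.le
  have hA : 1 < x ^ (n + 1) := one_lt_pow₀ hx (by omega)
  have hB : 1 < x ^ (n + 2) := one_lt_pow₀ hx (by omega)
  rw [xiTerm, zetaTerm, inv_pow, show k + 1 + n + 1 = k + (n + 2) by omega,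
    show k + 1 + n = k + (n + 1) by omega, pow_add x k, pow_add x k]
  generalize x ^ k = y at *
  generalize x ^ (n + 1) = A at *
  generalize x ^ (n + 2) = B at *
  have h₁ : A - y⁻¹ ≠ 0 := (sub_pos.mpr ((inv_le_one_of_one_le₀ hy).trans_lt hA)).ne'
  have h₂ : B - y⁻¹ ≠ 0 := (sub_pos.mpr ((inv_le_one_of_one_le₀ hy).trans_lt hB)).ne'
  have hy0 : y ≠ 0 := by positivity
  field_simp

theorem sum_antidiagonal_eq_xiTerm (hx : 1 < x) (k n : ℕ) :
    ∑ p ∈ antidiagonal n, (x - 1) * x ^ k * (x ^ (k + p.1) * zetaTerm x (k + 1 + p.1 + p.2)) =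
      xiTerm x (x⁻¹ ^ k) n := by
  rw [Nat.sum_antidiagonal_eq_sum_range_succ_mk, xiTerm_inv_pow hx, ← geom_sum_mul,
    Finset.sum_mul, Finset.mul_sum, Finset.sum_mul]
  refine Finset.sum_congr rfl fun i hi => ?_
  rw [show k + 1 + i + (n - i) = k + 1 + n by grind, pow_add]
  ring

theorem xiTerm_pos (hx : 1 < x) {ε : ℝ} (hε : ε ≤ 1) (n : ℕ) : 0 < xiTerm x ε n := by
  have hA : 1 < x ^ (n + 1) := one_lt_pow₀ hx (by omega)
  have hB : 1 < x ^ (n + 2) := one_lt_pow₀ hx (by omega)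
  have : 0 < x ^ (n + 1) - ε := by linarith
  have : 0 < x ^ (n + 2) - ε := by linarith
  have : 0 < x ^ (n + 1) - 1 := by linarith
  have : 0 < x - 1 := by linarith
  unfold xiTerm
  positivity

theorem strictMonoOn_xiTerm (hx : 1 < x) (n : ℕ) :
    StrictMonoOn (fun ε => xiTerm x ε n) (Set.Iic 1) := by
  intro ε' _ ε (hε : ε ≤ 1) hε'
  have hA : 1 < x ^ (n + 1) := one_lt_pow₀ hx (by omega)
  have hB : 1 < x ^ (n + 2) := one_lt_pow₀ hx (by omega)
  have hc : 0 < (x ^ (n + 1) - 1) * (x - 1) ^ 2 := by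
    have : 0 < x ^ (n + 1) - 1 := by linarith
    have : 0 < x - 1 := by linarith
    positivity
  refine div_lt_div_of_pos_left hc (by nlinarith) ?_
  exact mul_lt_mul'' (by linarith) (by linarith) (by linarith) (by linarith)

theorem xiTerm_one_le (hx : 1 < x) (n : ℕ) : xiTerm x 1 n ≤ (x - 1) * x⁻¹ ^ n := by
  have hA : 1 < x ^ (n + 1) := one_lt_pow₀ hx (by omega)
  have hB : 1 < x ^ (n + 2) := one_lt_pow₀ hx (by omega)
  have hn : 1 ≤ x ^ n := one_le_pow₀ hx.le
  rw [xiTerm, mul_div_mul_left _ _ (sub_pos.mpr hA).ne', inv_pow, ← div_eq_mul_inv,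
    div_le_div_iff₀ (by linarith) (by positivity), pow_add x n 2]
  nlinarith [mul_le_mul_of_nonneg_left hn (sub_nonneg.mpr hx.le)]

theorem summable_xiTerm (hx : 1 < x) {ε : ℝ} (hε : ε ≤ 1) : Summable (xiTerm x ε) := by
  refine .of_nonneg_of_le (fun n => (xiTerm_pos hx hε n).le) (fun n => ?_)
    ((summable_geometric_of_lt_one (by positivity) (inv_lt_one_of_one_lt₀ hx)).mul_left (x - 1))
  calc xiTerm x ε n ≤ xiTerm x 1 n :=
        (strictMonoOn_xiTerm hx n).monotoneOn hε Set.self_mem_Iic hε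
    _ ≤ (x - 1) * x⁻¹ ^ n := xiTerm_one_le hx n

theorem strictMonoOn_xiSeries (hx : 1 < x) : StrictMonoOn (xiSeries x) (Set.Icc 0 1) :=
  fun _ hε' _ hε hlt => (summable_xiTerm hx hε.2).tsum_lt_tsum_of_nonneg
    (fun n => (xiTerm_pos hx hε'.2 n).le)
    (fun n => (strictMonoOn_xiTerm hx n hε'.2 hε.2 hlt).le)
    (strictMonoOn_xiTerm hx 0 hε'.2 hε.2 hlt)

theorem continuousWithinAt_xiSeries (hx : 1 < x) :
    ContinuousWithinAt (xiSeries x) (Set.Icc 0 1) 0 := by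
  refine tendsto_tsum_of_dominated_convergence (bound := xiTerm x 1) (summable_xiTerm hx le_rfl)
    (fun n => ?_) (eventually_nhdsWithin_of_forall fun ε hε n => ?_)
  · have hden : (x ^ (n + 1) - 0) * (x ^ (n + 2) - 0) ≠ 0 := by
      rw [sub_zero, sub_zero]; positivity
    have hcont : ContinuousAt (fun ε => xiTerm x ε n) 0 :=
      continuousAt_const.div (by fun_prop) hden
    exact hcont.continuousWithinAt
  · rw [Real.norm_of_nonneg (xiTerm_pos hx hε.2 n).le]
    exact (strictMonoOn_xiTerm hx n).monotoneOn hε.2 Set.self_mem_Iic hε.2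

theorem xiSeries_zero (hx : 1 < x) : xiSeries x 0 = (x - 1) / (x + 1) := by
  have h₁ := (hasSum_geometric_of_lt_one (by positivity) (inv_lt_one_of_one_lt₀ hx)).mul_left
    ((x - 1) ^ 2 / x ^ 2)
  have h₂ := (hasSum_geometric_of_lt_one (by positivity)
    (inv_lt_one_of_one_lt₀ (one_lt_pow₀ hx two_ne_zero))).mul_left ((x - 1) ^ 2 / x ^ 3)
  have hx0 : x ≠ 0 := by positivity
  have hterm : xiTerm x 0 =
      fun n => (x - 1) ^ 2 / x ^ 2 * x⁻¹ ^ n - (x - 1) ^ 2 / x ^ 3 * (x ^ 2)⁻¹ ^ n := by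
    funext n
    rw [xiTerm, inv_pow, inv_pow, ← pow_mul, mul_comm 2 n, pow_mul, pow_succ, pow_add]
    have : x ^ n ≠ 0 := by positivity
    field_simp
    ring
  have hvalue : (x - 1) ^ 2 / x ^ 2 * (1 - x⁻¹)⁻¹ - (x - 1) ^ 2 / x ^ 3 * (1 - (x ^ 2)⁻¹)⁻¹ =
      (x - 1) / (x + 1) := by
    have : x - 1 ≠ 0 := by linarith
    have : x + 1 ≠ 0 := by linarith
    have : x ^ 2 - 1 ≠ 0 := by nlinarith
    field_simp
    ring
  rw [xiSeries, hterm, ← hvalue]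
  exact (h₁.sub h₂).tsum_eq

end

theorem zeta_eq_tsum_zetaTerm (b h : ℕ) : zeta b h = ∑' i, zetaTerm b (h + i) := rfl

theorem Xi_eq_xiSeries {b : ℕ} (hb : 1 < b) (k : ℕ) : Xi b k = xiSeries b ((b : ℝ)⁻¹ ^ k) := by
  have hx : (1 : ℝ) < b := by exact_mod_cast hb
  set f : ℕ × ℕ → ℝ :=
    fun p => ((b : ℝ) - 1) * b ^ k * (b ^ (k + p.1) * zetaTerm b (k + 1 + p.1 + p.2))
  have hdiag (n : ℕ) : ∑ p ∈ antidiagonal n, f p = xiTerm b ((b : ℝ)⁻¹ ^ k) n :=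
    sum_antidiagonal_eq_xiTerm hx k n
  have hf : Summable f := by
    refine summable_of_summable_sum_antidiagonal_of_nonneg (fun p => ?_) ?_
    · have := zetaTerm_nonneg hx.le (k + 1 + p.1 + p.2)
      have : (0 : ℝ) ≤ b - 1 := by linarith
      positivity
    · simp only [hdiag]
      exact summable_xiTerm hx (pow_le_one₀ (by positivity) (inv_le_one_of_one_le₀ hx.le))
  calc Xi b k = ∑' i, ∑' m, f (i, m) := by
        simp only [Xi, zeta_eq_tsum_zetaTerm, f, tsum_mul_left, add_assoc]
    _ = ∑' p, f p := hf.tsum_prod.symm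
    _ = xiSeries b ((b : ℝ)⁻¹ ^ k) := by
        rw [hf.tsum_eq_tsum_sum_antidiagonal]
        exact tsum_congr hdiag

/-- `Ξ_k` is strictly decreasing in `k` and `Ξ_k → (b−1)/(b+1)` as `k → ∞`. -/
theorem stmt6 (b : ℕ) (hb : 2 ≤ b) :
    StrictAnti (fun k : ℕ => Xi b k) ∧
    Tendsto (fun k : ℕ => Xi b k) atTop (nhds (((b : ℝ) - 1) / ((b : ℝ) + 1))) := by
  have hx : (1 : ℝ) < b := by exact_mod_cast hb
  have hε (k : ℕ) : (b : ℝ)⁻¹ ^ k ∈ Set.Icc 0 1 :=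
    ⟨by positivity, pow_le_one₀ (by positivity) (inv_le_one_of_one_le₀ hx.le)⟩
  simp only [Xi_eq_xiSeries hb, ← xiSeries_zero hx]
  constructor
  · intro k l hkl
    exact strictMonoOn_xiSeries hx (hε l) (hε k)
      (pow_lt_pow_right_of_lt_one₀ (by positivity) (inv_lt_one_of_one_lt₀ hx) hkl)
  · exact (continuousWithinAt_xiSeries hx).tendsto.comp (tendsto_nhdsWithin_iff.mpr
      ⟨tendsto_pow_atTop_nhds_zero_of_lt_one (by positivity) (inv_lt_one_of_one_lt₀ hx),
        Eventually.of_forall hε⟩)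
end

section
/- Fix an integer b ≥ 2, and define Ξ_k = (b−1)·b^k·∑_{h>k} b^{h−1}·ζ_h with ζ_h = ∑_{j≥h} (b−1)²/((b^j−1)(b^{j+1}−1)). Then Ξ_k < b³/(b³ + b² − b − 1) < 1 for all k ≥ 0. -/
/-!
For `x > 1` one has `x^(m+n) - 1 ≥ (x^n - 1) x^m`, strictly when `m > 0`. Applied with `n = 1, 2`
this bounds the summand `(b-1)²/((b^(m+1)-1)(b^(m+2)-1))` of `ζ` by `1/((b+1) b^(2m))`, strictly from
`m = 1` on. Two geometric series then give `ζ_(m+1) < b²/((b+1)(b²-1) b^(2m))` and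
`Ξ_k < (b-1) b^k · b²/((b+1)(b²-1)) · b^(-k) · b/(b-1) = b³/((b+1)(b²-1))`, and
`(b+1)(b²-1) = b³ + b² - b - 1 > b³` because `b² > b + 1`.
-/

section Real

variable {x : ℝ}

lemma sub_one_mul_pow_le (hx : 1 ≤ x) (n m : ℕ) : (x ^ n - 1) * x ^ m ≤ x ^ (m + n) - 1 := by
  have := one_le_pow₀ hx (n := m)
  rw [pow_add]
  linarith

lemma sub_one_mul_pow_lt (hx : 1 < x) (n : ℕ) {m : ℕ} (hm : m ≠ 0) :
    (x ^ n - 1) * x ^ m < x ^ (m + n) - 1 := by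
  have := one_lt_pow₀ hx hm
  rw [pow_add]
  linarith

lemma sq_sub_one_mul_pow_nonneg (hx : 1 ≤ x) (m : ℕ) : 0 ≤ (x ^ 2 - 1) * x ^ m :=
  mul_nonneg (sub_nonneg.2 (one_le_pow₀ hx)) (by positivity)

lemma sub_one_sq_mul_le_mul (hx : 1 ≤ x) (m : ℕ) :
    (x - 1) ^ 2 * (x + 1) * x ^ (2 * m) ≤ (x ^ (m + 1) - 1) * (x ^ (m + 2) - 1) :=
  calc (x - 1) ^ 2 * (x + 1) * x ^ (2 * m) = ((x ^ 1 - 1) * x ^ m) * ((x ^ 2 - 1) * x ^ m) := by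
        ring
    _ ≤ _ := mul_le_mul (sub_one_mul_pow_le hx 1 m) (sub_one_mul_pow_le hx 2 m)
        (sq_sub_one_mul_pow_nonneg hx m) (sub_nonneg.2 (one_le_pow₀ hx))

lemma sub_one_sq_mul_lt_mul (hx : 1 < x) {m : ℕ} (hm : m ≠ 0) :
    (x - 1) ^ 2 * (x + 1) * x ^ (2 * m) < (x ^ (m + 1) - 1) * (x ^ (m + 2) - 1) :=
  calc (x - 1) ^ 2 * (x + 1) * x ^ (2 * m) = ((x ^ 1 - 1) * x ^ m) * ((x ^ 2 - 1) * x ^ m) := by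
        ring
    _ < _ := mul_lt_mul' (sub_one_mul_pow_le hx.le 1 m) (sub_one_mul_pow_lt hx 2 hm)
        (sq_sub_one_mul_pow_nonneg hx.le m) (sub_pos.2 (one_lt_pow₀ hx (by omega)))

lemma sub_one_sq_div_eq_inv_mul (hx : 1 < x) (m : ℕ) :
    (x - 1) ^ 2 / ((x - 1) ^ 2 * (x + 1) * x ^ (2 * m)) = (x + 1)⁻¹ * (x⁻¹ ^ 2) ^ m := by
  have : x - 1 ≠ 0 := by linarith
  have : x + 1 ≠ 0 := by linarith
  rw [inv_pow, inv_pow, ← pow_mul, mul_comm 2 m]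
  field_simp

lemma sub_one_sq_div_nonneg (hx : 1 ≤ x) (n : ℕ) :
    0 ≤ (x - 1) ^ 2 / ((x ^ n - 1) * (x ^ (n + 1) - 1)) :=
  div_nonneg (sq_nonneg _) (mul_nonneg (sub_nonneg.2 (one_le_pow₀ hx)) (sub_nonneg.2 (one_le_pow₀ hx)))

lemma sub_one_sq_div_le (hx : 1 < x) (m : ℕ) :
    (x - 1) ^ 2 / ((x ^ (m + 1) - 1) * (x ^ (m + 2) - 1)) ≤ (x + 1)⁻¹ * (x⁻¹ ^ 2) ^ m := by
  have hpos : 0 < (x - 1) ^ 2 * (x + 1) * x ^ (2 * m) := by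
    have : 0 < x - 1 := by linarith
    have : 0 < x + 1 := by linarith
    positivity
  rw [← sub_one_sq_div_eq_inv_mul hx]
  exact div_le_div_of_nonneg_left (sq_nonneg _) hpos (sub_one_sq_mul_le_mul hx.le m)

lemma sub_one_sq_div_lt (hx : 1 < x) {m : ℕ} (hm : m ≠ 0) :
    (x - 1) ^ 2 / ((x ^ (m + 1) - 1) * (x ^ (m + 2) - 1)) < (x + 1)⁻¹ * (x⁻¹ ^ 2) ^ m := by
  have : 0 < x - 1 := by linarith
  have : 0 < x + 1 := by linarith
  rw [← sub_one_sq_div_eq_inv_mul hx]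
  exact div_lt_div_of_pos_left (by positivity) (by positivity) (sub_one_sq_mul_lt_mul hx hm)

lemma tsum_lt_mul_geometric {f : ℕ → ℝ} {c r : ℝ} (hr₀ : 0 ≤ r) (hr₁ : r < 1)
    (hf₀ : ∀ i, 0 ≤ f i) (hf : ∀ i, f i ≤ c * r ^ i) {j : ℕ} (hj : f j < c * r ^ j) :
    ∑' i, f i < c * (1 - r)⁻¹ := by
  rw [← tsum_geometric_of_lt_one hr₀ hr₁, ← tsum_mul_left]
  exact Summable.tsum_lt_tsum_of_nonneg hf₀ hf hj
    ((summable_geometric_of_lt_one hr₀ hr₁).mul_left c)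

end Real

section Xi

variable {b : ℕ}

lemma zeta_nonneg (hb : 1 < b) (h : ℕ) : 0 ≤ zeta b h :=
  tsum_nonneg fun i => sub_one_sq_div_nonneg (by exact_mod_cast hb.le) (h + i)

lemma zeta_succ_lt (hb : 1 < b) (m : ℕ) :
    zeta b (m + 1) < ((b : ℝ) + 1)⁻¹ * ((b : ℝ)⁻¹ ^ 2) ^ m * (1 - (b : ℝ)⁻¹ ^ 2)⁻¹ := by
  have hx : (1 : ℝ) < b := by exact_mod_cast hb
  refine tsum_lt_mul_geometric (j := 1) (by positivity)
    (pow_lt_one₀ (by positivity) (inv_lt_one_of_one_lt₀ hx) two_ne_zero)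
    (fun i => sub_one_sq_div_nonneg hx.le _) (fun i => ?_) ?_
  · rw [mul_assoc, ← pow_add, add_right_comm]
    exact sub_one_sq_div_le hx (m + i)
  · rw [mul_assoc, ← pow_add, add_right_comm]
    exact sub_one_sq_div_lt hx (by omega)

lemma Xi_lt (hb : 1 < b) (k : ℕ) :
    Xi b k < (b : ℝ) ^ 3 / (((b : ℝ) + 1) * ((b : ℝ) ^ 2 - 1)) := by
  have hx : (1 : ℝ) < b := by exact_mod_cast hb
  set x : ℝ := (b : ℝ)
  set c := (x + 1)⁻¹ * (1 - x⁻¹ ^ 2)⁻¹ * x⁻¹ ^ k with hc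
  have : x ≠ 0 := by positivity
  have : x - 1 ≠ 0 := by linarith
  have : x + 1 ≠ 0 := by linarith
  have : x ^ 2 - 1 ≠ 0 := by nlinarith
  have hbound : ∀ i, x ^ (k + i) * zeta b (k + 1 + i) < c * x⁻¹ ^ i := fun i =>
    calc x ^ (k + i) * zeta b (k + 1 + i)
        < x ^ (k + i) * ((x + 1)⁻¹ * (x⁻¹ ^ 2) ^ (k + i) * (1 - x⁻¹ ^ 2)⁻¹) := by
          rw [add_right_comm]
          exact mul_lt_mul_of_pos_left (zeta_succ_lt hb (k + i)) (by positivity)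
      _ = c * x⁻¹ ^ i := by
          rw [hc]
          simp only [inv_pow, ← pow_mul]
          field_simp
          ring
  have hsum : ∑' i, x ^ (k + i) * zeta b (k + 1 + i) < c * (1 - x⁻¹)⁻¹ :=
    tsum_lt_mul_geometric (j := 0) (by positivity) (inv_lt_one_of_one_lt₀ hx)
      (fun i => mul_nonneg (by positivity) (zeta_nonneg hb _)) (fun i => (hbound i).le)
      (hbound 0)
  calc Xi b k < (x - 1) * x ^ k * (c * (1 - x⁻¹)⁻¹) :=
        mul_lt_mul_of_pos_left hsum (mul_pos (by linarith) (by positivity))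
    _ = x ^ 3 / ((x + 1) * (x ^ 2 - 1)) := by
        rw [hc]
        simp only [inv_pow]
        field_simp

end Xi

/-- `Ξ_k < b³/(b³ + b² − b − 1) < 1` for all `k ≥ 0`. -/
theorem stmt8 (b : ℕ) (hb : 2 ≤ b) (k : ℕ) :
    Xi b k < (b : ℝ) ^ 3 / ((b : ℝ) ^ 3 + (b : ℝ) ^ 2 - (b : ℝ) - 1) ∧
    (b : ℝ) ^ 3 / ((b : ℝ) ^ 3 + (b : ℝ) ^ 2 - (b : ℝ) - 1) < 1 := by
  have hx : (2 : ℝ) ≤ b := by exact_mod_cast hb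
  have hfactor : (b : ℝ) ^ 3 + (b : ℝ) ^ 2 - (b : ℝ) - 1 = ((b : ℝ) + 1) * ((b : ℝ) ^ 2 - 1) := by
    ring
  refine ⟨hfactor ▸ Xi_lt hb k, ?_⟩
  rw [div_lt_one (by nlinarith)]
  nlinarith
end
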